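/- Suppose 0 ∈ Ω and that ∇x is the unique solution of min ‖w‖_1 subject to A_n w = A_n(∇x). Then x is the unique solution of min ‖∇z‖_1 subject to A_n z = A_n x. -/

import Mathlib

/-- The unitary one-dimensional discrete Fourier transform on `ℂ^n`. -/
noncomputable def dft (n : ℕ) (z : Fin n → ℂ) : Fin n → ℂ :=
  fun k => (1 / (Real.sqrt n : ℂ)) * ∑ j : Fin n, z j *
    Complex.exp (-2 * (Real.pi : ℂ) * Complex.I * ((k : ℕ) : ℂ) * ((j : ℕ) : ℂ) / (n : ℂ))

/-- The periodic finite difference operator `(∇z)_j = z_j - z_{(j-1) mod n}`. -/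
def fdiff (n : ℕ) [NeZero n] (z : Fin n → ℂ) : Fin n → ℂ := fun j => z j - z (j - 1)

/-! The Fourier transform turns `∇` into multiplication by `1 - e^{-2πik/n}`, so every `z` with
`A z = A x` has `A (∇z) = A (∇x)`; the `ℓ¹`-optimality of `∇x` then gives optimality of `x`.
For uniqueness, `∇z = ∇x` forces `z - x` to be constant, and the `k = 0` coefficient, which is the
sum of the entries, pins that constant to `0`. -/

open Finset

lemma pow_finVal_add_of_pow_eq_one {M : Type*} [Monoid M] {n : ℕ} [NeZero n] {q : M}
    (hq : q ^ n = 1) (i j : Fin n) :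
    q ^ ((i + j : Fin n) : ℕ) = q ^ (i : ℕ) * q ^ (j : ℕ) := by
  rw [Fin.val_add, ← pow_eq_pow_mod _ hq, pow_add]

lemma sum_mul_pow_finVal_sub_one {R : Type*} [CommSemiring R] {n : ℕ} [NeZero n] {q : R}
    (hq : q ^ n = 1) (z : Fin n → R) :
    ∑ j : Fin n, z (j - 1) * q ^ (j : ℕ) = q * ∑ j : Fin n, z j * q ^ (j : ℕ) := by
  rw [mul_sum]
  refine Fintype.sum_equiv (Equiv.subRight 1) _ _ fun j => ?_
  have hpow : q ^ (j : ℕ) = q ^ ((j - 1 : Fin n) : ℕ) * q := by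
    conv_lhs => rw [← sub_add_cancel j 1]
    rw [pow_finVal_add_of_pow_eq_one hq, Fin.val_one', ← pow_eq_pow_mod _ hq, pow_one]
  rw [Equiv.subRight_apply, hpow]
  ring

noncomputable def dftRoot (n : ℕ) (k : Fin n) : ℂ :=
  Complex.exp (-2 * Real.pi * Complex.I * (k : ℕ) / n)

lemma dftRoot_pow_card (n : ℕ) [NeZero n] (k : Fin n) : dftRoot n k ^ n = 1 := by
  have hn : (n : ℂ) ≠ 0 := Nat.cast_ne_zero.mpr (NeZero.ne n)
  rw [dftRoot, ← Complex.exp_nat_mul]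
  convert Complex.exp_int_mul_two_pi_mul_I (-(k : ℕ) : ℤ) using 2
  push_cast
  field_simp

lemma dft_eq_sum_dftRoot_pow (n : ℕ) (z : Fin n → ℂ) (k : Fin n) :
    dft n z k = (1 / (Real.sqrt n : ℂ)) * ∑ j : Fin n, z j * dftRoot n k ^ (j : ℕ) := by
  unfold dft dftRoot
  congr 1
  refine sum_congr rfl fun j _ => ?_
  rw [← Complex.exp_nat_mul]
  ring_nf

lemma dft_fdiff (n : ℕ) [NeZero n] (z : Fin n → ℂ) (k : Fin n) :
    dft n (fdiff n z) k = (1 - dftRoot n k) * dft n z k := by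
  simp only [dft_eq_sum_dftRoot_pow, fdiff, sub_mul, sum_sub_distrib,
    sum_mul_pow_finVal_sub_one (dftRoot_pow_card n k)]
  ring

lemma dft_zero (n : ℕ) [NeZero n] (z : Fin n → ℂ) :
    dft n z 0 = (1 / (Real.sqrt n : ℂ)) * ∑ j : Fin n, z j := by
  simp [dft_eq_sum_dftRoot_pow, dftRoot]

lemma sum_eq_of_dft_zero_eq {n : ℕ} [NeZero n] {z x : Fin n → ℂ} (h : dft n z 0 = dft n x 0) :
    ∑ j : Fin n, z j = ∑ j : Fin n, x j := by
  have hn : (0 : ℝ) < n := Nat.cast_pos.mpr (Nat.pos_of_neZero n)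
  rw [dft_zero, dft_zero] at h
  refine mul_left_cancel₀ ?_ h
  simp [(Real.sqrt_pos.mpr hn).ne']

open Fin.NatCast in
lemma apply_eq_apply_zero_of_fdiff_eq_zero {n : ℕ} [NeZero n] {d : Fin n → ℂ} (h : fdiff n d = 0)
    (i : Fin n) : d i = d 0 := by
  have hshift (m : ℕ) : d (m : Fin n) = d 0 := by
    induction m with
    | zero => simp
    | succ m ih =>
      rw [← ih, ← sub_eq_zero, ← add_sub_cancel_right ((m : Fin n)) 1]
      simpa [fdiff] using congrFun h ((m : Fin n) + 1)
  simpa using hshift i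

lemma eq_of_fdiff_eq_of_sum_eq {n : ℕ} [NeZero n] {z x : Fin n → ℂ}
    (hdiff : fdiff n z = fdiff n x) (hsum : ∑ j : Fin n, z j = ∑ j : Fin n, x j) :
    z = x := by
  set d := z - x
  have hd : fdiff n d = 0 := by
    funext j
    have hj := congrFun hdiff j
    simp only [fdiff, d, Pi.sub_apply, Pi.zero_apply] at hj ⊢
    linear_combination hj
  have hconst := apply_eq_apply_zero_of_fdiff_eq_zero hd
  have hd0 : d 0 = 0 := by
    have hsum_d : ∑ j, d j = 0 := by simp [d, sum_sub_distrib, hsum]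
    simpa [hconst, NeZero.ne n] using hsum_d
  funext j
  rw [← sub_eq_zero]
  exact (hconst j).trans hd0

theorem stmt12_general (n : ℕ) [NeZero n] (Ω : Finset (Fin n)) (h0 : (0 : Fin n) ∈ Ω)
    (x : Fin n → ℂ)
    (hx : (∀ k ∈ Ω, dft n (fdiff n x) k = dft n (fdiff n x) k) ∧
      ∀ w : Fin n → ℂ, (∀ k ∈ Ω, dft n w k = dft n (fdiff n x) k) →
        ((∑ j : Fin n, ‖fdiff n x j‖) ≤ ∑ j : Fin n, ‖w j‖ ∧
          ((∑ j : Fin n, ‖w j‖) ≤ ∑ j : Fin n, ‖fdiff n x j‖ → w = fdiff n x))) :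
    ∀ z : Fin n → ℂ, (∀ k ∈ Ω, dft n z k = dft n x k) →
      ((∑ j : Fin n, ‖fdiff n x j‖) ≤ ∑ j : Fin n, ‖fdiff n z j‖ ∧
        ((∑ j : Fin n, ‖fdiff n z j‖) ≤ ∑ j : Fin n, ‖fdiff n x j‖ → z = x)) := by
  intro z hz
  have hdiff : ∀ k ∈ Ω, dft n (fdiff n z) k = dft n (fdiff n x) k := fun k hk => by
    rw [dft_fdiff, dft_fdiff, hz k hk]
  obtain ⟨hmin, huniq⟩ := hx.2 (fdiff n z) hdiff
  exact ⟨hmin, fun hle =>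
    eq_of_fdiff_eq_of_sum_eq (huniq hle) (sum_eq_of_dft_zero_eq (hz 0 h0))⟩

/-- If `∇x` is the unique `ℓ¹`-minimizer subject to `A w = A (∇x)`, and `0 ∈ Ω`, then `x` is
the unique minimizer of `‖∇z‖₁` subject to `A z = A x` (reduction argument for Theorem 2). -/
theorem stmt12 (n : ℕ) [NeZero n] (hn : 2 ≤ n) (Ω : Finset (Fin n)) (h0 : (0 : Fin n) ∈ Ω)
    (x : Fin n → ℂ)
    (hx : (∀ k ∈ Ω, dft n (fdiff n x) k = dft n (fdiff n x) k) ∧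
      ∀ w : Fin n → ℂ, (∀ k ∈ Ω, dft n w k = dft n (fdiff n x) k) →
        ((∑ j : Fin n, ‖fdiff n x j‖) ≤ ∑ j : Fin n, ‖w j‖ ∧
          ((∑ j : Fin n, ‖w j‖) ≤ ∑ j : Fin n, ‖fdiff n x j‖ → w = fdiff n x))) :
    ∀ z : Fin n → ℂ, (∀ k ∈ Ω, dft n z k = dft n x k) →
      ((∑ j : Fin n, ‖fdiff n x j‖) ≤ ∑ j : Fin n, ‖fdiff n z j‖ ∧
        ((∑ j : Fin n, ‖fdiff n z j‖) ≤ ∑ j : Fin n, ‖fdiff n x j‖ → z = x)) :=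
  stmt12_general n Ω h0 x hx
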